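/- arXiv:2310.00756 — 2 statements merged into one kernel-verified Lean document; each statement's English description precedes it below -/
import Mathlib

section
/- Let a, b, τ, χ > 0 and λ ≤ 0. Define μ₋ = [-(1-(1+τ)λ+aτ) - √((1-(1+τ)λ+aτ)² - 4τ((a-λ)(1-λ)+χaλ/b))]/(2τ), interpreted as a complex number when the discriminant is negative. Then Re(μ₋) < 0. -/
/-!
The principal square root always has non-negative real part, while the linear coefficient
`1 - (1 + τ) λ + a τ` is positive for `λ ≤ 0`; so the numerator of `μ₋` has negative real part
and the denominator `2 τ` is a positive real.
-/

namespace Complex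

lemma cpow_one_half_re_nonneg (z : ℂ) : 0 ≤ (z ^ ((1 : ℂ) / 2)).re := by
  rw [one_div, cpow_inv_two_re]
  exact Real.sqrt_nonneg _

lemma re_neg_sub_cpow_one_half_div_neg {p t : ℝ} (hp : 0 < p) (ht : 0 < t) (z : ℂ) :
    ((-(p : ℂ) - z ^ ((1 : ℂ) / 2)) / (2 * (t : ℂ))).re < 0 := by
  have hroot := cpow_one_half_re_nonneg z
  rw [show (2 * (t : ℂ)) = ((2 * t : ℝ) : ℂ) by push_cast; ring, div_ofReal_re]
  apply div_neg_of_neg_of_pos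
  · simp only [sub_re, neg_re, ofReal_re]
    linarith
  · positivity

end Complex

theorem mu_minus_re_neg_general (a b tau chi lam : ℝ) (ha : 0 < a)
    (htau : 0 < tau) (hlam : lam ≤ 0) :
    ((-( ((1 - (1 + tau) * lam + a * tau : ℝ) : ℂ))
        - (((1 - (1 + tau) * lam + a * tau) ^ 2
            - 4 * tau * ((a - lam) * (1 - lam) + chi * a * lam / b) : ℝ) : ℂ) ^ ((1 : ℂ) / 2))
      / (2 * (tau : ℂ))).re < 0 := by
  have hlinear : 0 < 1 - (1 + tau) * lam + a * tau := by nlinarith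
  exact Complex.re_neg_sub_cpow_one_half_div_neg hlinear htau _

theorem mu_minus_re_neg (a b tau chi lam : ℝ) (ha : 0 < a) (hb : 0 < b)
    (htau : 0 < tau) (hchi : 0 < chi) (hlam : lam ≤ 0) :
    ((-( ((1 - (1 + tau) * lam + a * tau : ℝ) : ℂ))
        - (((1 - (1 + tau) * lam + a * tau) ^ 2
            - 4 * tau * ((a - lam) * (1 - lam) + chi * a * lam / b) : ℝ) : ℂ) ^ ((1 : ℂ) / 2))
      / (2 * (tau : ℂ))).re < 0 :=
  mu_minus_re_neg_general a b tau chi lam ha htau hlam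
end

section
/- Let a, b, χ > 0 with b > 2χ, and let ū ≥ u̲ ≥ 0 be real numbers satisfying ū ≤ max(a - χu̲, 0)/(b-χ) and u̲ ≥ (a - χū)/(b-χ). Then ū = u̲ = a/b. -/
/-!
Clearing the denominator `b - χ > 0`, the two bounds read `(b - χ) ū ≤ a - χ u̲` and
`a - χ ū ≤ (b - χ) u̲`. Adding them gives `(b - 2χ)(ū - u̲) ≤ 0`, so `ū = u̲` because `b > 2χ`,
and then both bounds together say `b ū = a`. The truncation `max (a - χ u̲) 0` is harmless:
if it were active, `ū` and hence `u̲` would vanish, against `u̲ ≥ a / (b - χ) > 0`.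
-/

lemma eq_div_of_mul_le_sub_mul_of_sub_mul_le_mul {a b χ u v : ℝ} (hb : 0 < b) (hbχ : 2 * χ < b)
    (hvu : v ≤ u) (hu : (b - χ) * u ≤ a - χ * v) (hv : a - χ * u ≤ (b - χ) * v) :
    u = a / b ∧ v = a / b := by
  have hgap : (b - 2 * χ) * (u - v) ≤ 0 := by linarith
  have huv : u = v :=
    le_antisymm (sub_nonpos.mp (nonpos_of_mul_nonpos_right hgap (by linarith))) hvu
  subst huv
  have hbu : b * u = a := by linarith
  have hu_eq : u = a / b := by rw [eq_div_iff hb.ne', mul_comm, hbu]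
  exact ⟨hu_eq, hu_eq⟩

lemma sub_mul_pos_of_le_max_div {a d χ u v : ℝ} (ha : 0 < a) (hd : 0 < d) (hv : 0 ≤ v)
    (hvu : v ≤ u) (hu : u ≤ max (a - χ * v) 0 / d) (hv' : (a - χ * u) / d ≤ v) :
    0 < a - χ * v := by
  by_contra! hneg
  rw [max_eq_right hneg, zero_div] at hu
  have hu0 : u = 0 := le_antisymm hu (hv.trans hvu)
  rw [hu0, mul_zero, sub_zero] at hv'
  linarith [div_pos ha hd]

theorem squeeze_to_constant_general (a b chi ubar ulow : ℝ) (ha : 0 < a) (hb : 0 < b)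
    (hb2 : b > 2 * chi)
    (h1 : ulow ≤ ubar) (h2 : 0 ≤ ulow)
    (h3 : ubar ≤ max (a - chi * ulow) 0 / (b - chi))
    (h4 : ulow ≥ (a - chi * ubar) / (b - chi)) :
    ubar = a / b ∧ ulow = a / b := by
  have hd : 0 < b - chi := by linarith
  have hpos := sub_mul_pos_of_le_max_div ha hd h2 h1 h3 h4
  rw [max_eq_left hpos.le, le_div_iff₀ hd, mul_comm ubar] at h3
  rw [ge_iff_le, div_le_iff₀ hd, mul_comm ulow] at h4
  exact eq_div_of_mul_le_sub_mul_of_sub_mul_le_mul hb hb2 h1 h3 h4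

theorem squeeze_to_constant (a b chi ubar ulow : ℝ) (ha : 0 < a) (hb : 0 < b)
    (hchi : 0 < chi) (hb2 : b > 2 * chi)
    (h1 : ulow ≤ ubar) (h2 : 0 ≤ ulow)
    (h3 : ubar ≤ max (a - chi * ulow) 0 / (b - chi))
    (h4 : ulow ≥ (a - chi * ubar) / (b - chi)) :
    ubar = a / b ∧ ulow = a / b :=
  squeeze_to_constant_general a b chi ubar ulow ha hb hb2 h1 h2 h3 h4
end
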